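/- arXiv:1501.06130 — 5 statements merged into one kernel-verified Lean document; each statement's English description precedes it below -/
import Mathlib

section
/- Let D ⊆ ℝ^d be an open set, let R₀ > 0, and let x, y ∈ D be such that there exist distinct connected components D₁, …, D_m of D with x ∈ D₁, y ∈ D_m, and dist(D_i, D_{i+1}) < R₀ for every 1 ≤ i ≤ m − 1. Then there exist an integer m' ≥ 1, constants ε ∈ (0, 1) and r₀ ∈ (0, εR₀/4), and points x₁, …, x_{m'} ∈ D such that: (i) x ∈ B(x₁, r₀) and y ∈ B(x_{m'}, r₀); (ii) |x_j − x_{j+1}| ≤ (1 − ε)R₀ for every 1 ≤ j ≤ m' − 1; (iii) the balls B(x₁, r₀), …, B(x_{m'}, r₀) are pairwise disjoint and each ball B(x_j, r₀) is contained in D. -/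
open Metric Filter Topology

/-!
There are finitely many gaps between consecutive components, each `< R₀`, so some
`ε ∈ (0, 1)` makes all of them `≤ (1 - ε) R₀ =: L`. In the graph on `D` joining points at
distance `≤ L`, each preconnected subset of `D` lies in one connected component (reachability
is an equivalence relation with open classes), so `x` and `y` are joined by a path. A path
visits distinct points, and finitely many distinct points of an open set have pairwise
disjoint balls of a common small radius inside `D`.
-/

section ProximityGraph

variable {X : Type*} [PseudoMetricSpace X] {D : Set X} {L : ℝ}

def proximityGraph (D : Set X) (L : ℝ) : SimpleGraph X where
  Adj u v := u ≠ v ∧ u ∈ D ∧ v ∈ D ∧ dist u v ≤ L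
  symm := ⟨fun u v ⟨huv, hu, hv, h⟩ => ⟨huv.symm, hv, hu, dist_comm u v ▸ h⟩⟩
  loopless := ⟨fun _ h => h.1 rfl⟩

lemma proximityGraph_adj {u v : X} :
    (proximityGraph D L).Adj u v ↔ u ≠ v ∧ u ∈ D ∧ v ∈ D ∧ dist u v ≤ L :=
  Iff.rfl

lemma proximityGraph_reachable_of_dist_le {u v : X} (hu : u ∈ D) (hv : v ∈ D)
    (h : dist u v ≤ L) : (proximityGraph D L).Reachable u v := by
  by_cases huv : u = v
  · exact huv ▸ SimpleGraph.Reachable.refl u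
  · exact SimpleGraph.Adj.reachable ⟨huv, hu, hv, h⟩

lemma IsPreconnected.proximityGraph_reachable {C : Set X} (hC : IsPreconnected C)
    (hCD : C ⊆ D) (hL : 0 < L) {p q : X} (hp : p ∈ C) (hq : q ∈ C) :
    (proximityGraph D L).Reachable p q := by
  refine hC.induction₂ _ (fun u hu => ?_) (fun _ _ _ _ _ _ => .trans)
    (fun _ _ _ _ => .symm) hp hq
  filter_upwards [self_mem_nhdsWithin, nhdsWithin_le_nhds (ball_mem_nhds u hL)] with v hv hvu
  exact proximityGraph_reachable_of_dist_le (hCD hu) (hCD hv) (mem_ball'.1 hvu).le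

lemma proximityGraph_reachable_of_chain (hL : 0 < L) {m : ℕ} {C : ℕ → Set X}
    (hpre : ∀ i < m, IsPreconnected (C i)) (hCD : ∀ i < m, C i ⊆ D)
    (hclose : ∀ i, i + 1 < m → ∃ a ∈ C i, ∃ b ∈ C (i + 1), dist a b ≤ L)
    {x : X} (hx : x ∈ C 0) : ∀ i < m, ∀ q ∈ C i, (proximityGraph D L).Reachable x q := by
  intro i
  induction i with
  | zero => exact fun hm q hq => (hpre 0 hm).proximityGraph_reachable (hCD 0 hm) hL hx hq
  | succ i ih =>
    intro hi q hq
    obtain ⟨a, ha, b, hb, hab⟩ := hclose i hi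
    have hxa := ih (by omega) a ha
    have hab := proximityGraph_reachable_of_dist_le (hCD i (by omega) ha) (hCD (i + 1) hi hb) hab
    exact hxa.trans (hab.trans ((hpre _ hi).proximityGraph_reachable (hCD _ hi) hL hb hq))

lemma proximityGraph_getVert_mem {u v : X} (p : (proximityGraph D L).Walk u v) (hu : u ∈ D)
    {i : ℕ} (hi : i ≤ p.length) : p.getVert i ∈ D := by
  cases i with
  | zero => rwa [p.getVert_zero]
  | succ i => exact (proximityGraph_adj.1 (p.adj_getVert_succ (i := i) (by omega))).2.2.1

end ProximityGraph

lemma exists_forall_le_one_sub_mul {ι : Type*} {s : Set ι} (hs : s.Finite) {f : ι → ℝ}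
    {R : ℝ} (hR : 0 < R) (hf : ∀ i ∈ s, f i < R) :
    ∃ ε, 0 < ε ∧ ε < 1 ∧ ∀ i ∈ s, f i ≤ (1 - ε) * R := by
  have hle : ∀ i ∈ s, ∀ᶠ ε in 𝓝 (0 : ℝ), f i ≤ (1 - ε) * R := fun i hi => by
    filter_upwards [eventually_lt_nhds (div_pos (sub_pos.2 (hf i hi)) hR)] with ε hε
    rw [lt_div_iff₀ hR] at hε
    linarith
  exact ((eventually_lt_nhds one_pos).and (hs.eventually_all.2 hle)).exists_gt

lemma eventually_balls_subset_and_pairwise_disjoint {X : Type*} [MetricSpace X] {D : Set X}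
    (hD : IsOpen D) {ι : Type*} {s : Set ι} (hs : s.Finite) {p : ι → X} (hinj : s.InjOn p)
    (hpD : ∀ i ∈ s, p i ∈ D) :
    ∀ᶠ r in 𝓝 (0 : ℝ), (∀ i ∈ s, ball (p i) r ⊆ D) ∧
      s.Pairwise fun i j => Disjoint (ball (p i) r) (ball (p j) r) := by
  refine (hs.eventually_all.2 fun i hi => ?_).and
    (hs.eventually_all.2 fun i hi => hs.eventually_all.2 fun j hj => ?_)
  · obtain ⟨ρ, hρ, hρD⟩ := Metric.isOpen_iff.1 hD _ (hpD i hi)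
    filter_upwards [eventually_lt_nhds hρ] with r hr
    exact (ball_subset_ball hr.le).trans hρD
  · by_cases hij : i = j
    · exact Eventually.of_forall fun _ h => absurd hij h
    · have hdist : 0 < dist (p i) (p j) / 2 := half_pos (dist_pos.2 fun h => hij (hinj hi hj h))
      filter_upwards [eventually_lt_nhds hdist] with r hr _
      exact ball_disjoint_ball (by linarith)

theorem exists_chain_of_roughly_connected_general
    {d : ℕ} (D : Set (EuclideanSpace ℝ (Fin d))) (hD : IsOpen D)
    (R₀ : ℝ) (hR₀ : 0 < R₀)
    (x y : EuclideanSpace ℝ (Fin d)) (hx : x ∈ D)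
    (m : ℕ) (hm : 1 ≤ m) (Dc : ℕ → Set (EuclideanSpace ℝ (Fin d)))
    (hcomp : ∀ i < m, ∃ p ∈ D, Dc i = connectedComponentIn D p)
    (hxD : x ∈ Dc 0) (hyD : y ∈ Dc (m - 1))
    (hclose : ∀ i, i + 1 < m → ∃ a ∈ Dc i, ∃ b ∈ Dc (i + 1), dist a b < R₀) :
    ∃ (m' : ℕ) (ε r₀ : ℝ) (pts : ℕ → EuclideanSpace ℝ (Fin d)),
      1 ≤ m' ∧ 0 < ε ∧ ε < 1 ∧ 0 < r₀ ∧ r₀ < ε * R₀ / 4 ∧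
      (∀ j < m', pts j ∈ D) ∧
      x ∈ ball (pts 0) r₀ ∧ y ∈ ball (pts (m' - 1)) r₀ ∧
      (∀ j, j + 1 < m' → dist (pts j) (pts (j + 1)) ≤ (1 - ε) * R₀) ∧
      (∀ i j, i < m' → j < m' → i ≠ j →
        Disjoint (ball (pts i) r₀) (ball (pts j) r₀)) ∧
      (∀ j < m', ball (pts j) r₀ ⊆ D) := by
  choose! a ha b hb hab using hclose
  obtain ⟨ε, hε0, hε1, hεab⟩ := exists_forall_le_one_sub_mul
    ((Set.finite_lt_nat m).subset fun i (hi : i + 1 < m) => show i < m by omega) hR₀ hab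
  have hDc : ∀ i < m, IsPreconnected (Dc i) ∧ Dc i ⊆ D := fun i hi => by
    obtain ⟨p, -, hp⟩ := hcomp i hi
    exact hp ▸ ⟨isPreconnected_connectedComponentIn, connectedComponentIn_subset _ _⟩
  have hxy : (proximityGraph D ((1 - ε) * R₀)).Reachable x y :=
    proximityGraph_reachable_of_chain (mul_pos (sub_pos.2 hε1) hR₀)
      (fun i hi => (hDc i hi).1) (fun i hi => (hDc i hi).2)
      (fun i hi => ⟨a i, ha i hi, b i, hb i hi, hεab i hi⟩) hxD (m - 1) (by omega) y hyD
  obtain ⟨p, hp⟩ := hxy.exists_isPath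
  obtain ⟨r₀, hr₀, hr₀ε, hballD, hdisj⟩ :=
    ((eventually_lt_nhds (by positivity : 0 < ε * R₀ / 4)).and
      (eventually_balls_subset_and_pairwise_disjoint hD (Set.finite_le_nat p.length)
        hp.getVert_injOn fun i hi => proximityGraph_getVert_mem p hx hi)).exists_gt
  refine ⟨p.length + 1, ε, r₀, p.getVert, by omega, hε0, hε1, hr₀, hr₀ε,
    fun j hj => proximityGraph_getVert_mem p hx (Nat.lt_succ_iff.1 hj), ?_, ?_,
    fun j hj => (proximityGraph_adj.1 (p.adj_getVert_succ (i := j) (by omega))).2.2.2,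
    fun i j hi hj hij => hdisj (Nat.lt_succ_iff.1 hi) (Nat.lt_succ_iff.1 hj) hij,
    fun j hj => hballD j (Nat.lt_succ_iff.1 hj)⟩
  · rw [p.getVert_zero]
    exact mem_ball_self hr₀
  · rw [Nat.add_sub_cancel, p.getVert_length]
    exact mem_ball_self hr₀

/-- If `x, y` in an open set `D ⊆ ℝ^d` are linked by a chain of distinct
connected components of `D` at mutual distance `< R₀`, then there are points
`x₁, …, x_{m'} ∈ D`, `ε ∈ (0,1)` and `r₀ ∈ (0, εR₀/4)` such that `x ∈ B(x₁, r₀)`,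
`y ∈ B(x_{m'}, r₀)`, consecutive points are at distance `≤ (1-ε)R₀`, and the balls
`B(x_j, r₀)` are pairwise disjoint and contained in `D`. -/
theorem exists_chain_of_roughly_connected
    {d : ℕ} (D : Set (EuclideanSpace ℝ (Fin d))) (hD : IsOpen D)
    (R₀ : ℝ) (hR₀ : 0 < R₀)
    (x y : EuclideanSpace ℝ (Fin d)) (hx : x ∈ D) (hy : y ∈ D)
    (m : ℕ) (hm : 1 ≤ m) (Dc : ℕ → Set (EuclideanSpace ℝ (Fin d)))
    (hcomp : ∀ i < m, ∃ p ∈ D, Dc i = connectedComponentIn D p)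
    (hdistinct : ∀ i j, i < m → j < m → i ≠ j → Dc i ≠ Dc j)
    (hxD : x ∈ Dc 0) (hyD : y ∈ Dc (m - 1))
    (hclose : ∀ i, i + 1 < m → ∃ a ∈ Dc i, ∃ b ∈ Dc (i + 1), dist a b < R₀) :
    ∃ (m' : ℕ) (ε r₀ : ℝ) (pts : ℕ → EuclideanSpace ℝ (Fin d)),
      1 ≤ m' ∧ 0 < ε ∧ ε < 1 ∧ 0 < r₀ ∧ r₀ < ε * R₀ / 4 ∧
      (∀ j < m', pts j ∈ D) ∧
      x ∈ ball (pts 0) r₀ ∧ y ∈ ball (pts (m' - 1)) r₀ ∧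
      (∀ j, j + 1 < m' → dist (pts j) (pts (j + 1)) ≤ (1 - ε) * R₀) ∧
      (∀ i j, i < m' → j < m' → i ≠ j →
        Disjoint (ball (pts i) r₀) (ball (pts j) r₀)) ∧
      (∀ j < m', ball (pts j) r₀ ⊆ D) :=
  exists_chain_of_roughly_connected_general D hD R₀ hR₀ x y hx m hm Dc hcomp hxD hyD hclose
end

section
/- Let D ⊆ ℝ^d be a nonempty bounded open set and let R₀ > 0. Then there exist an integer n ≥ 1, open sets D̃₁, …, D̃_n, a constant r₀ with 0 < r₀ < R₀/8, and points x₁, …, x_n, such that: (i) D = D̃₁ ∪ ⋯ ∪ D̃_n; (ii) for every 1 ≤ i ≤ n, any two points of D̃_i are at distance at most R₀/2 from each other; (iii) for every 1 ≤ i ≤ n, the closed ball of center x_i and radius 2r₀ is contained in D̃_i. -/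
/-!
Cover `D` by finitely many balls `B(xᵢ, R₀/4)` with centres `xᵢ ∈ D` (a bounded set in a proper
space is totally bounded) and take `D̃ᵢ = D ∩ B(xᵢ, R₀/4)`. Since `D` is open and there are finitely
many centres, a single small `r₀` gives `B̄(xᵢ, 2r₀) ⊆ D` for all `i`, and `r₀ < R₀/8` is exactly
what puts `B̄(xᵢ, 2r₀)` inside `B(xᵢ, R₀/4)`.
-/

open Metric Filter Topology

lemma Set.Finite.eventually_forall_closedBall_subset {α : Type*} [PseudoMetricSpace α]
    {s t : Set α} (hs : IsOpen s) (ht : t.Finite) (hts : t ⊆ s) :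
    ∀ᶠ r in 𝓝 (0 : ℝ), ∀ x ∈ t, closedBall x r ⊆ s :=
  ht.eventually_all.2 fun _ hx ↦ eventually_closedBall_subset (hs.mem_nhds (hts hx))

lemma dist_le_of_mem_ball_of_mem_ball {α : Type*} [PseudoMetricSpace α] {x a b : α} {r : ℝ}
    (ha : a ∈ ball x r) (hb : b ∈ ball x r) : dist a b ≤ 2 * r := by
  rw [mem_ball] at ha hb
  linarith [dist_triangle_right a b x]

/-- A nonempty bounded open set `D ⊆ ℝ^d` can be written as a finite
union of open sets `D̃₁, …, D̃_n`, each of diameter at most `R₀/2`, and each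
containing a closed ball of radius `2r₀` for some common `0 < r₀ < R₀/8`. -/
theorem exists_finite_cover_of_bounded_open
    {d : ℕ} (D : Set (EuclideanSpace ℝ (Fin d))) (hD : IsOpen D)
    (hne : D.Nonempty) (hbd : Bornology.IsBounded D) (R₀ : ℝ) (hR₀ : 0 < R₀) :
    ∃ (n : ℕ) (Dt : Fin n → Set (EuclideanSpace ℝ (Fin d)))
      (r₀ : ℝ) (xs : Fin n → EuclideanSpace ℝ (Fin d)),
      1 ≤ n ∧ 0 < r₀ ∧ r₀ < R₀ / 8 ∧
      (∀ i, IsOpen (Dt i)) ∧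
      D = ⋃ i, Dt i ∧
      (∀ i, ∀ a ∈ Dt i, ∀ b ∈ Dt i, dist a b ≤ R₀ / 2) ∧
      (∀ i, closedBall (xs i) (2 * r₀) ⊆ Dt i) := by
  obtain ⟨t, htD, ht, hDt⟩ := finite_approx_of_totallyBounded
    (hbd.isCompact_closure.totallyBounded.subset subset_closure) (R₀ / 4) (by positivity)
  have htwice : Tendsto (fun r : ℝ ↦ 2 * r) (𝓝 0) (𝓝 0) := by
    simpa using (tendsto_id (x := 𝓝 (0 : ℝ))).const_mul 2
  have hsmall : ∀ᶠ r in 𝓝[>] 0, (∀ x ∈ t, closedBall x (2 * r) ⊆ D) ∧ r < R₀ / 8 :=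
    nhdsWithin_le_nhds <| (htwice.eventually (ht.eventually_forall_closedBall_subset hD htD)).and
      (eventually_lt_nhds (by positivity))
  obtain ⟨r₀, ⟨hr₀D, hr₀R⟩, hr₀⟩ := (hsmall.and self_mem_nhdsWithin).exists
  obtain ⟨n, xs, rfl⟩ := ht.fin_embedding
  rw [Set.biUnion_range] at hDt
  obtain ⟨i₀, -⟩ := Set.mem_iUnion.1 (hDt hne.some_mem)
  refine ⟨n, fun i ↦ D ∩ ball (xs i) (R₀ / 4), r₀, xs, i₀.pos, hr₀, hr₀R,
    fun _ ↦ hD.inter isOpen_ball, (Set.inter_eq_left.2 hDt).symm.trans (Set.inter_iUnion _ _),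
    fun _ _ ha _ hb ↦ by linarith [dist_le_of_mem_ball_of_mem_ball ha.2 hb.2],
    fun i ↦ Set.subset_inter (hr₀D _ ⟨i, rfl⟩) (closedBall_subset_ball (by linarith))⟩
end

section
/- Let ν be a Lévy measure on ℝ^d and let f ∈ C_c^∞(ℝ^d). Define Lf(x) := ∫_{ℝ^d} ( f(x+z) − f(x) − ⟨∇f(x), z⟩·1_{{|z| ≤ 1}}(z) ) ν(dz). Then −∫_{ℝ^d} f(x) · Lf(x) dx = (1/2) ∫_{ℝ^d} ∫_{ℝ^d} ( f(x+z) − f(x) )² ν(dz) dx, and in particular both sides are finite. -/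
open MeasureTheory Metric
open scoped ENNReal

section Aux

variable {d : ℕ}

/-- Criterion for integrability on `volume.prod ν` given a uniform sectionwise bound
of the shape `C * min 1 ‖z‖²`. -/
private lemma aux_integrable_prod (ν : Measure (EuclideanSpace ℝ (Fin d))) [SigmaFinite ν]
    (hνint : ∫⁻ z, ENNReal.ofReal (min 1 (‖z‖ ^ 2)) ∂ν < ⊤)
    (h : EuclideanSpace ℝ (Fin d) × EuclideanSpace ℝ (Fin d) → ℝ)
    (hmeas : Measurable h) (C : ℝ≥0∞) (hC : C ≠ ⊤)
    (hbound : ∀ z, ∫⁻ x, (‖h (x, z)‖₊ : ℝ≥0∞) ∂volume ≤ C * ENNReal.ofReal (min 1 (‖z‖ ^ 2))) :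
    Integrable h (volume.prod ν) := by
  refine ⟨hmeas.aestronglyMeasurable, ?_⟩
  have hswap : ∫⁻ p, (‖h p‖₊ : ℝ≥0∞) ∂(volume.prod ν)
      = ∫⁻ z, ∫⁻ x, (‖h (x, z)‖₊ : ℝ≥0∞) ∂volume ∂ν :=
    lintegral_prod_symm _ hmeas.nnnorm.coe_nnreal_ennreal.aemeasurable
  have hfin : ∫⁻ p, (‖h p‖₊ : ℝ≥0∞) ∂(volume.prod ν) < ⊤ := by
    rw [hswap]
    calc ∫⁻ z, ∫⁻ x, (‖h (x, z)‖₊ : ℝ≥0∞) ∂volume ∂ν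
        ≤ ∫⁻ z, C * ENNReal.ofReal (min 1 (‖z‖ ^ 2)) ∂ν := lintegral_mono hbound
      _ = C * ∫⁻ z, ENNReal.ofReal (min 1 (‖z‖ ^ 2)) ∂ν := lintegral_const_mul' _ _ hC
      _ < ⊤ := ENNReal.mul_lt_top hC.lt_top hνint
  exact hfin

end Aux

/-- For a Lévy measure `ν` on `ℝ^d` and `f ∈ C_c^∞(ℝ^d)`, with
`Lf(x) = ∫ (f(x+z) - f(x) - ⟨∇f(x), z⟩ 1_{|z|≤1}(z)) ν(dz)`, one has
`-∫ f·Lf = (1/2) ∫∫ (f(x+z) - f(x))² ν(dz) dx`, both sides being finite. -/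
theorem neg_integral_mul_generator_eq_half_dirichlet_form
    {d : ℕ} (ν : Measure (EuclideanSpace ℝ (Fin d))) [SigmaFinite ν]
    (hν0 : ν {0} = 0)
    (hνint : ∫⁻ z, ENNReal.ofReal (min 1 (‖z‖ ^ 2)) ∂ν < ⊤)
    (f : EuclideanSpace ℝ (Fin d) → ℝ)
    (hf : ContDiff ℝ (⊤ : ℕ∞) f) (hfc : HasCompactSupport f) :
    Integrable
      (fun p : EuclideanSpace ℝ (Fin d) × EuclideanSpace ℝ (Fin d) =>
        (f (p.1 + p.2) - f p.1) ^ 2) (volume.prod ν) ∧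
    -∫ x, f x *
        (∫ z, (f (x + z) - f x -
          (if ‖z‖ ≤ 1 then (inner ℝ (gradient f x) z : ℝ) else 0)) ∂ν) =
      (1 / 2) * ∫ x, ∫ z, (f (x + z) - f x) ^ 2 ∂ν := by
  classical
  -- basic regularity facts
  have hfd : Differentiable ℝ f := hf.differentiable (by simp)
  have hfcont : Continuous f := hf.continuous
  obtain ⟨L, hL⟩ := ContDiff.lipschitzWith_of_hasCompactSupport hfc hf (by simp)
  obtain ⟨M2, hM2⟩ := ContDiff.lipschitzWith_of_hasCompactSupport (hfc.fderiv ℝ)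
    (hf.fderiv_right (m := (⊤ : ℕ∞)) ((by simp))) (by simp)
  obtain ⟨M0, hM0⟩ := hfc.exists_bound_of_continuous hfcont
  have hM0nn : 0 ≤ M0 := le_trans (norm_nonneg _) (hM0 0)
  have hFcont : Continuous (fderiv ℝ f) := hf.continuous_fderiv (by simp)
  -- supports
  set K := tsupport f with hKdef
  have hKc : IsCompact K := hfc
  set S := cthickening 1 K with hSdef
  have hSc : IsCompact S := hKc.cthickening
  have hKS : K ⊆ S := self_subset_cthickening K
  -- gradient = fderiv
  have hgrad : ∀ (x z : EuclideanSpace ℝ (Fin d)),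
      (inner ℝ (gradient f x) z : ℝ) = fderiv ℝ f x z := by
    intro x z
    simp only [gradient]
    exact InnerProductSpace.toDual_symm_apply
  -- Taylor estimate
  have taylor : ∀ x z : EuclideanSpace ℝ (Fin d),
      ‖f (x + z) - f x - fderiv ℝ f x z‖ ≤ M2 * ‖z‖ * ‖z‖ := by
    intro x z
    have hbound : ∀ y ∈ closedBall x ‖z‖,
        ‖fderiv ℝ f y - fderiv ℝ f x‖ ≤ (M2 : ℝ) * ‖z‖ := by
      intro y hy'
      have h1 : ‖fderiv ℝ f y - fderiv ℝ f x‖ ≤ (M2 : ℝ) * ‖y - x‖ := by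
        have := hM2.dist_le_mul y x
        rwa [dist_eq_norm, dist_eq_norm] at this
      have h2 : ‖y - x‖ ≤ ‖z‖ := by
        rw [mem_closedBall, dist_eq_norm] at hy'
        exact hy'
      exact h1.trans (mul_le_mul_of_nonneg_left h2 M2.coe_nonneg)
    have hy : x + z ∈ closedBall x ‖z‖ := by
      simp [mem_closedBall, dist_eq_norm]
    have key := (convex_closedBall x ‖z‖).norm_image_sub_le_of_norm_fderiv_le'
      (fun y _ => hfd y) hbound (mem_closedBall_self (norm_nonneg z)) hy
    have hxz : (x + z) - x = z := by abel
    rw [hxz] at key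
    exact key
  -- the integral of f * (directional derivative of f) vanishes
  have hzero : ∀ z : EuclideanSpace ℝ (Fin d), ∫ x, f x * fderiv ℝ f x z = 0 := by
    intro z
    have h1 : ∀ x : EuclideanSpace ℝ (Fin d), fderiv ℝ f x z = lineDeriv ℝ f x z :=
      fun x => ((hfd x).lineDeriv_eq_fderiv (v := z)).symm
    have h2 := LipschitzWith.integral_lineDeriv_mul_eq
      (μ := (volume : Measure (EuclideanSpace ℝ (Fin d)))) hL hL hfc z
    have h3 : ∀ x : EuclideanSpace ℝ (Fin d), lineDeriv ℝ f x (-z) = - lineDeriv ℝ f x z :=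
      fun x => lineDeriv_neg
    simp only [h3] at h2
    have h4 : ∫ x, -lineDeriv ℝ f x z * f x = -∫ x, lineDeriv ℝ f x z * f x := by
      rw [← integral_neg]
      congr 1
      ext x
      ring
    rw [h4] at h2
    have h5 : ∫ x, lineDeriv ℝ f x z * f x = 0 := by linarith
    calc ∫ x, f x * fderiv ℝ f x z = ∫ x, lineDeriv ℝ f x z * f x := by
          congr 1; ext x; rw [h1 x]; ring
      _ = 0 := h5
  -- basic section integrabilities
  have ic : ∀ z : EuclideanSpace ℝ (Fin d), Continuous fun x => f (x + z) :=
    fun z => hfcont.comp (continuous_add_right z)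
  have icsupp : ∀ z : EuclideanSpace ℝ (Fin d), HasCompactSupport fun x => f (x + z) :=
    fun z => hfc.comp_homeomorph (Homeomorph.addRight z)
  have i1 : ∀ z : EuclideanSpace ℝ (Fin d), Integrable (fun x => f x * f (x + z)) :=
    fun z => ((hfcont.mul (ic z)).integrable_of_hasCompactSupport hfc.mul_right)
  have i2 : Integrable (fun x : EuclideanSpace ℝ (Fin d) => f x * f x) :=
    (hfcont.mul hfcont).integrable_of_hasCompactSupport hfc.mul_right
  have i3 : ∀ z : EuclideanSpace ℝ (Fin d), Integrable (fun x => f x * fderiv ℝ f x z) := by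
    intro z
    exact (hfcont.mul (hFcont.clm_apply continuous_const)).integrable_of_hasCompactSupport
      hfc.mul_right
  have i4 : ∀ z : EuclideanSpace ℝ (Fin d), Integrable (fun x => f (x + z) * f (x + z)) :=
    fun z => ((ic z).mul (ic z)).integrable_of_hasCompactSupport ((icsupp z).mul_right)
  -- the key identity for fixed z : "integration by parts"
  have hsub : ∀ z : EuclideanSpace ℝ (Fin d), (∫ x, f x * f (x + z)) - (∫ x, f x * f x)
      = -(1/2) * ∫ x, (f (x + z) - f x) ^ 2 := by
    intro z
    have expand : (fun x : EuclideanSpace ℝ (Fin d) => (f (x + z) - f x) ^ 2)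
        = fun x => f (x + z) * f (x + z) - 2 * (f x * f (x + z)) + f x * f x := by
      ext x; ring
    have e1 : ∫ x, (f (x + z) - f x) ^ 2
        = (∫ x, f (x + z) * f (x + z)) - 2 * (∫ x, f x * f (x + z)) + ∫ x, f x * f x := by
      have ia : Integrable (fun x : EuclideanSpace ℝ (Fin d) =>
          f (x + z) * f (x + z) - 2 * (f x * f (x + z))) volume :=
        (i4 z).sub ((i1 z).const_mul 2)
      rw [expand, integral_add ia i2, integral_sub (i4 z) ((i1 z).const_mul 2),
        integral_const_mul]
    have e2 : ∫ x, f (x + z) * f (x + z) = ∫ x, f x * f x :=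
      integral_add_right_eq_self (fun x => f x * f x) z
    rw [e1, e2]
    ring
  have key : ∀ z : EuclideanSpace ℝ (Fin d), (∫ x, f x * (f (x + z) - f x -
      (if ‖z‖ ≤ 1 then fderiv ℝ f x z else 0)))
      = -(1/2) * ∫ x, (f (x + z) - f x) ^ 2 := by
    intro z
    by_cases hz : ‖z‖ ≤ 1
    · simp only [if_pos hz]
      have expand : (fun x : EuclideanSpace ℝ (Fin d) =>
          f x * (f (x + z) - f x - fderiv ℝ f x z))
          = fun x => f x * f (x + z) - f x * f x - f x * fderiv ℝ f x z := by
        ext x; ring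
      have ia : Integrable (fun x : EuclideanSpace ℝ (Fin d) =>
          f x * f (x + z) - f x * f x) volume := (i1 z).sub i2
      rw [expand, integral_sub ia (i3 z), integral_sub (i1 z) i2, hzero z,
        sub_zero, hsub z]
    · simp only [if_neg hz, sub_zero]
      have expand : (fun x : EuclideanSpace ℝ (Fin d) => f x * (f (x + z) - f x))
          = fun x => f x * f (x + z) - f x * f x := by
        ext x; ring
      rw [expand, integral_sub (i1 z) i2, hsub z]
  -- ======= product integrability I1 =======
  have hB2fin : ∫⁻ x : EuclideanSpace ℝ (Fin d), ENNReal.ofReal (2 * f x ^ 2) ∂volume < ⊤ := by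
    have h1 : ∀ x : EuclideanSpace ℝ (Fin d),
        ENNReal.ofReal (2 * f x ^ 2) = 2 * ENNReal.ofReal (f x * f x) := by
      intro x
      rw [ENNReal.ofReal_mul (by norm_num)]
      norm_num [sq]
    simp only [h1]
    rw [lintegral_const_mul' _ _ (by norm_num)]
    have h2 : ∫⁻ x, (‖f x * f x‖₊ : ℝ≥0∞) ∂(volume) < ⊤ := i2.hasFiniteIntegral
    have h3 : ∫⁻ x : EuclideanSpace ℝ (Fin d), ENNReal.ofReal (f x * f x) ∂volume < ⊤ := by
      refine lt_of_le_of_lt (lintegral_mono fun x => ?_) h2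
      rw [← enorm_eq_nnnorm, ← ofReal_norm]
      exact ENNReal.ofReal_le_ofReal (le_abs_self _)
    exact ENNReal.mul_lt_top (by norm_num) h3
  set B2 : ℝ≥0∞ := ∫⁻ x : EuclideanSpace ℝ (Fin d), ENNReal.ofReal (2 * f x ^ 2) ∂volume
    with hB2def
  set C1 : ℝ≥0∞ := ENNReal.ofReal ((L : ℝ) ^ 2) * volume S + 2 * B2 with hC1def
  have hC1top : C1 ≠ ⊤ := by
    apply ne_of_lt
    apply ENNReal.add_lt_top.2
    constructor
    · exact ENNReal.mul_lt_top ENNReal.ofReal_lt_top (hSc.measure_lt_top)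
    · exact ENNReal.mul_lt_top (by norm_num) hB2fin
  have hsq_meas : Measurable fun p :
      EuclideanSpace ℝ (Fin d) × EuclideanSpace ℝ (Fin d) => (f (p.1 + p.2) - f p.1) ^ 2 := by
    have : Continuous fun p :
        EuclideanSpace ℝ (Fin d) × EuclideanSpace ℝ (Fin d) => (f (p.1 + p.2) - f p.1) ^ 2 := by
      apply Continuous.pow
      exact (hfcont.comp (continuous_fst.add continuous_snd)).sub
        (hfcont.comp continuous_fst)
    exact this.measurable
  have I1 : Integrable
      (fun p : EuclideanSpace ℝ (Fin d) × EuclideanSpace ℝ (Fin d) =>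
        (f (p.1 + p.2) - f p.1) ^ 2) (volume.prod ν) := by
    apply aux_integrable_prod ν hνint _ hsq_meas C1 hC1top
    intro z
    by_cases hz : ‖z‖ ≤ 1
    · -- small z : indicator bound with Lipschitz estimate
      have hmin : min 1 (‖z‖ ^ 2) = ‖z‖ ^ 2 :=
        min_eq_right (by nlinarith [norm_nonneg z])
      have hpt : ∀ x : EuclideanSpace ℝ (Fin d), (‖(f (x + z) - f x) ^ 2‖₊ : ℝ≥0∞)
          ≤ S.indicator (fun _ => ENNReal.ofReal ((L:ℝ)^2 * ‖z‖^2)) x := by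
        intro x
        by_cases hxS : x ∈ S
        · rw [Set.indicator_of_mem hxS, ← enorm_eq_nnnorm, ← ofReal_norm]
          apply ENNReal.ofReal_le_ofReal
          have h1 : ‖f (x + z) - f x‖ ≤ (L:ℝ) * ‖z‖ := by
            have := hL.dist_le_mul (x + z) x
            rw [dist_eq_norm, dist_eq_norm] at this
            simpa using this
          rw [Real.norm_eq_abs] at h1 ⊢
          rw [abs_of_nonneg (sq_nonneg _)]
          nlinarith [abs_nonneg (f (x+z) - f x), sq_abs (f (x+z) - f x),
            norm_nonneg z, L.coe_nonneg]
        · rw [Set.indicator_of_notMem hxS]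
          have hfx : f x = 0 := by
            by_contra h0
            exact hxS (hKS (subset_tsupport f h0))
          have hfxz : f (x + z) = 0 := by
            by_contra h0
            apply hxS
            apply mem_cthickening_of_dist_le x (x + z) 1 K
              (subset_tsupport f h0)
            rw [dist_eq_norm]
            simpa using hz
          simp [hfx, hfxz]
      calc ∫⁻ x, (‖(f (x + z) - f x) ^ 2‖₊ : ℝ≥0∞) ∂volume
          ≤ ∫⁻ x, S.indicator (fun _ => ENNReal.ofReal ((L:ℝ)^2 * ‖z‖^2)) x ∂volume :=
            lintegral_mono hpt
        _ = ENNReal.ofReal ((L:ℝ)^2 * ‖z‖^2) * volume S := by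
            rw [lintegral_indicator_const (hSc.isClosed.measurableSet)]
        _ ≤ C1 * ENNReal.ofReal (min 1 (‖z‖ ^ 2)) := by
            rw [hmin, ENNReal.ofReal_mul (by positivity)]
            calc ENNReal.ofReal ((L:ℝ)^2) * ENNReal.ofReal (‖z‖^2) * volume S
                = (ENNReal.ofReal ((L:ℝ)^2) * volume S) * ENNReal.ofReal (‖z‖^2) := by ring
              _ ≤ C1 * ENNReal.ofReal (‖z‖^2) := by
                  apply mul_le_mul_left
                  rw [hC1def]
                  exact le_self_add
    · -- large z : L² bound
      have hmin : min 1 (‖z‖ ^ 2) = 1 := by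
        apply min_eq_left
        push_neg at hz
        nlinarith
      have hpt : ∀ x : EuclideanSpace ℝ (Fin d), (‖(f (x + z) - f x) ^ 2‖₊ : ℝ≥0∞)
          ≤ ENNReal.ofReal (2 * f (x + z) ^ 2) + ENNReal.ofReal (2 * f x ^ 2) := by
        intro x
        rw [← enorm_eq_nnnorm, ← ofReal_norm, ← ENNReal.ofReal_add (by positivity) (by positivity)]
        apply ENNReal.ofReal_le_ofReal
        rw [Real.norm_eq_abs, abs_of_nonneg (sq_nonneg _)]
        nlinarith [sq_nonneg (f (x + z) + f x)]
      calc ∫⁻ x, (‖(f (x + z) - f x) ^ 2‖₊ : ℝ≥0∞) ∂volume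
          ≤ ∫⁻ x, (ENNReal.ofReal (2 * f (x + z) ^ 2)
              + ENNReal.ofReal (2 * f x ^ 2)) ∂volume := lintegral_mono hpt
        _ = (∫⁻ x, ENNReal.ofReal (2 * f (x + z) ^ 2) ∂volume) + B2 := by
            rw [lintegral_add_left]
            exact (ENNReal.measurable_ofReal.comp
              (((ic z).pow 2).measurable.const_mul 2))
        _ = B2 + B2 := by
            congr 1
            exact lintegral_add_right_eq_self
              (fun x => ENNReal.ofReal (2 * f x ^ 2)) z
        _ ≤ C1 * ENNReal.ofReal (min 1 (‖z‖ ^ 2)) := by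
            rw [hmin, ENNReal.ofReal_one, mul_one, hC1def, two_mul]
            exact le_add_self
  -- ======= product integrability I2 =======
  have hB1fin : ∫⁻ x : EuclideanSpace ℝ (Fin d), (‖f x‖₊ : ℝ≥0∞) ∂volume < ⊤ :=
    (hfcont.integrable_of_hasCompactSupport hfc).hasFiniteIntegral
  set B1 : ℝ≥0∞ := ∫⁻ x : EuclideanSpace ℝ (Fin d), (‖f x‖₊ : ℝ≥0∞) ∂volume with hB1def
  set C2 : ℝ≥0∞ := ENNReal.ofReal (M0 * M2) * volume K + ENNReal.ofReal M0 * (2 * B1)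
    with hC2def
  have hC2top : C2 ≠ ⊤ := by
    apply ne_of_lt
    apply ENNReal.add_lt_top.2
    refine ⟨ENNReal.mul_lt_top ENNReal.ofReal_lt_top (hKc.measure_lt_top), ?_⟩
    exact ENNReal.mul_lt_top ENNReal.ofReal_lt_top
      (ENNReal.mul_lt_top (by norm_num) hB1fin)
  have hG_meas : Measurable fun p :
      EuclideanSpace ℝ (Fin d) × EuclideanSpace ℝ (Fin d) =>
      f p.1 * (f (p.1 + p.2) - f p.1 -
        (if ‖p.2‖ ≤ 1 then fderiv ℝ f p.1 p.2 else 0)) := by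
    have m1 : Measurable fun p :
        EuclideanSpace ℝ (Fin d) × EuclideanSpace ℝ (Fin d) => f (p.1 + p.2) :=
      (hfcont.comp (continuous_fst.add continuous_snd)).measurable
    have m2 : Measurable fun p :
        EuclideanSpace ℝ (Fin d) × EuclideanSpace ℝ (Fin d) => f p.1 :=
      (hfcont.comp continuous_fst).measurable
    have m3 : Measurable fun p :
        EuclideanSpace ℝ (Fin d) × EuclideanSpace ℝ (Fin d) => fderiv ℝ f p.1 p.2 :=
      ((hFcont.comp continuous_fst).clm_apply continuous_snd).measurable
    have mset : MeasurableSet {p :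
        EuclideanSpace ℝ (Fin d) × EuclideanSpace ℝ (Fin d) | ‖p.2‖ ≤ 1} :=
      (isClosed_le ((continuous_norm.comp continuous_snd)) continuous_const).measurableSet
    exact m2.mul ((m1.sub m2).sub (Measurable.ite mset m3 measurable_const))
  have I2 : Integrable (fun p :
      EuclideanSpace ℝ (Fin d) × EuclideanSpace ℝ (Fin d) =>
      f p.1 * (f (p.1 + p.2) - f p.1 -
        (if ‖p.2‖ ≤ 1 then fderiv ℝ f p.1 p.2 else 0))) (volume.prod ν) := by
    apply aux_integrable_prod ν hνint _ hG_meas C2 hC2top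
    intro z
    by_cases hz : ‖z‖ ≤ 1
    · have hmin : min 1 (‖z‖ ^ 2) = ‖z‖ ^ 2 :=
        min_eq_right (by nlinarith [norm_nonneg z])
      have hpt : ∀ x : EuclideanSpace ℝ (Fin d), (‖f x * (f (x + z) - f x -
          (if ‖z‖ ≤ 1 then fderiv ℝ f x z else 0))‖₊ : ℝ≥0∞)
          ≤ K.indicator (fun _ => ENNReal.ofReal (M0 * M2 * ‖z‖^2)) x := by
        intro x
        simp only [if_pos hz]
        by_cases hxK : x ∈ K
        · rw [Set.indicator_of_mem hxK, ← enorm_eq_nnnorm, ← ofReal_norm]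
          apply ENNReal.ofReal_le_ofReal
          rw [norm_mul]
          have h1 : ‖f x‖ ≤ M0 := hM0 x
          have h2 := taylor x z
          calc ‖f x‖ * ‖f (x + z) - f x - fderiv ℝ f x z‖
              ≤ M0 * ((M2 : ℝ) * ‖z‖ * ‖z‖) := by
                apply mul_le_mul h1 h2 (norm_nonneg _) hM0nn
            _ = M0 * M2 * ‖z‖^2 := by ring
        · rw [Set.indicator_of_notMem hxK]
          have hfx : f x = 0 := image_eq_zero_of_notMem_tsupport hxK
          simp [hfx]
      calc ∫⁻ x, (‖f x * (f (x + z) - f x -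
              (if ‖z‖ ≤ 1 then fderiv ℝ f x z else 0))‖₊ : ℝ≥0∞) ∂volume
          ≤ ∫⁻ x, K.indicator (fun _ => ENNReal.ofReal (M0 * M2 * ‖z‖^2)) x ∂volume :=
            lintegral_mono hpt
        _ = ENNReal.ofReal (M0 * M2 * ‖z‖^2) * volume K := by
            rw [lintegral_indicator_const (isClosed_tsupport f).measurableSet]
        _ ≤ C2 * ENNReal.ofReal (min 1 (‖z‖ ^ 2)) := by
            rw [hmin, ENNReal.ofReal_mul (by positivity)]
            calc ENNReal.ofReal (M0 * M2) * ENNReal.ofReal (‖z‖^2) * volume K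
                = (ENNReal.ofReal (M0 * M2) * volume K) * ENNReal.ofReal (‖z‖^2) := by ring
              _ ≤ C2 * ENNReal.ofReal (‖z‖^2) := by
                  apply mul_le_mul_left
                  rw [hC2def]
                  exact le_self_add
    · have hmin : min 1 (‖z‖ ^ 2) = 1 := by
        apply min_eq_left
        push_neg at hz
        nlinarith
      have hpt : ∀ x : EuclideanSpace ℝ (Fin d), (‖f x * (f (x + z) - f x -
          (if ‖z‖ ≤ 1 then fderiv ℝ f x z else 0))‖₊ : ℝ≥0∞)
          ≤ ENNReal.ofReal M0 * ((‖f (x + z)‖₊ : ℝ≥0∞) + (‖f x‖₊ : ℝ≥0∞)) := by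
        intro x
        simp only [if_neg hz, sub_zero]
        rw [← enorm_eq_nnnorm, ← ofReal_norm, ← enorm_eq_nnnorm, ← ofReal_norm,
          ← enorm_eq_nnnorm, ← ofReal_norm,
          ← ENNReal.ofReal_add (norm_nonneg _) (norm_nonneg _),
          ← ENNReal.ofReal_mul hM0nn]
        apply ENNReal.ofReal_le_ofReal
        rw [norm_mul]
        calc ‖f x‖ * ‖f (x + z) - f x‖ ≤ M0 * ‖f (x + z) - f x‖ :=
              mul_le_mul_of_nonneg_right (hM0 x) (norm_nonneg _)
          _ ≤ M0 * (‖f (x + z)‖ + ‖f x‖) :=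
              mul_le_mul_of_nonneg_left (norm_sub_le _ _) hM0nn
      calc ∫⁻ x, (‖f x * (f (x + z) - f x -
              (if ‖z‖ ≤ 1 then fderiv ℝ f x z else 0))‖₊ : ℝ≥0∞) ∂volume
          ≤ ∫⁻ x, ENNReal.ofReal M0 * ((‖f (x + z)‖₊ : ℝ≥0∞) + (‖f x‖₊ : ℝ≥0∞)) ∂volume :=
            lintegral_mono hpt
        _ = ENNReal.ofReal M0 * ∫⁻ x,
              ((‖f (x + z)‖₊ : ℝ≥0∞) + (‖f x‖₊ : ℝ≥0∞)) ∂volume :=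
            lintegral_const_mul' _ _ ENNReal.ofReal_ne_top
        _ = ENNReal.ofReal M0 * ((∫⁻ x, (‖f (x + z)‖₊ : ℝ≥0∞) ∂volume) + B1) := by
            rw [lintegral_add_left ((ic z).measurable.nnnorm.coe_nnreal_ennreal)]
        _ = ENNReal.ofReal M0 * (B1 + B1) := by
            congr 2
            exact lintegral_add_right_eq_self (fun x => (‖f x‖₊ : ℝ≥0∞)) z
        _ ≤ C2 * ENNReal.ofReal (min 1 (‖z‖ ^ 2)) := by
            rw [hmin, ENNReal.ofReal_one, mul_one, hC2def, two_mul]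
            exact le_add_self
  -- ======= conclusion =======
  refine ⟨I1, ?_⟩
  -- rewrite inner gradient as fderiv, and pull `f x` inside the inner integral
  have hrw : (fun x : EuclideanSpace ℝ (Fin d) => f x *
        (∫ z, (f (x + z) - f x -
          (if ‖z‖ ≤ 1 then (inner ℝ (gradient f x) z : ℝ) else 0)) ∂ν))
      = fun x : EuclideanSpace ℝ (Fin d) => ∫ z, f x * (f (x + z) - f x -
          (if ‖z‖ ≤ 1 then fderiv ℝ f x z else 0)) ∂ν := by
    ext x
    rw [integral_const_mul]
    congr 1
    apply integral_congr_ae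
    filter_upwards with z
    rw [hgrad]
  rw [hrw]
  have hswap : ∫ x, ∫ z, f x * (f (x + z) - f x -
        (if ‖z‖ ≤ 1 then fderiv ℝ f x z else 0)) ∂ν
      = ∫ z, ∫ x, f x * (f (x + z) - f x -
        (if ‖z‖ ≤ 1 then fderiv ℝ f x z else 0)) ∂volume ∂ν :=
    integral_integral_swap I2
  rw [hswap]
  have hswap2 : ∫ x, ∫ z, (f (x + z) - f x) ^ 2 ∂ν
      = ∫ z, ∫ x, (f (x + z) - f x) ^ 2 ∂volume ∂ν :=
    integral_integral_swap I1
  rw [hswap2]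
  have hkey : ∫ z, ∫ x, f x * (f (x + z) - f x -
        (if ‖z‖ ≤ 1 then fderiv ℝ f x z else 0)) ∂volume ∂ν
      = ∫ z, -(1/2) * ∫ x, (f (x + z) - f x) ^ 2 ∂volume ∂ν := by
    apply integral_congr_ae
    filter_upwards with z
    exact key z
  rw [hkey, integral_const_mul]
  ring
end

section
/- Let ν be a Lévy measure on ℝ^d such that B(0, R₀) ⊆ supp(ν) for some R₀ > 0. If f ∈ L²(ℝ^d) vanishes almost everywhere outside some bounded set and satisfies ∫_{ℝ^d} ∫_{ℝ^d} ( f(x+z) − f(x) )² ν(dz) dx = 0, then f = 0 almost everywhere. -/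
/-!
By Tonelli, the vanishing of the Dirichlet form says that for `ν`-a.e. `z` the function `f` is
a.e. invariant under translation by `z` (a Lévy measure is σ-finite, so Tonelli applies). Since
`ν` is nonzero and does not charge `0`, some such `z` is nonzero. Then `f` is also invariant
under `n • z`, and for `n` large the translate of the bounded set carrying `f` misses the set
itself, so `f` vanishes a.e.
-/

open MeasureTheory Metric
open scoped ENNReal

theorem measure_le_norm_lt_top_of_lintegral_min_one_sq_lt_top {E : Type*}
    [NormedAddCommGroup E] [MeasurableSpace E] [OpensMeasurableSpace E] {ν : Measure E}
    (hν : ∫⁻ z, ENNReal.ofReal (min 1 (‖z‖ ^ 2)) ∂ν < ∞) {δ : ℝ} (hδ : 0 < δ) :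
    ν {z | δ ≤ ‖z‖} < ∞ := by
  have hε : ENNReal.ofReal (min 1 (δ ^ 2)) ≠ 0 := by simp [hδ.ne']
  calc ν {z | δ ≤ ‖z‖}
      ≤ ν {z | ENNReal.ofReal (min 1 (δ ^ 2)) ≤ ENNReal.ofReal (min 1 (‖z‖ ^ 2))} :=
        measure_mono fun z (hz : δ ≤ ‖z‖) => by simp only [Set.mem_ofPred_eq]; gcongr
    _ ≤ (∫⁻ z, ENNReal.ofReal (min 1 (‖z‖ ^ 2)) ∂ν) / ENNReal.ofReal (min 1 (δ ^ 2)) :=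
        meas_ge_le_lintegral_div (by fun_prop) hε ENNReal.ofReal_ne_top
    _ < ∞ := ENNReal.div_lt_top hν.ne hε

theorem sigmaFinite_of_lintegral_min_one_sq_lt_top {E : Type*}
    [NormedAddCommGroup E] [MeasurableSpace E] [OpensMeasurableSpace E] {ν : Measure E}
    (hν0 : ν {0} = 0) (hν : ∫⁻ z, ENNReal.ofReal (min 1 (‖z‖ ^ 2)) ∂ν < ∞) :
    SigmaFinite ν := by
  refine Measure.sigmaFinite_of_countable
    (S := insert {0} (Set.range fun n : ℕ => {z : E | 1 / (n + 1 : ℝ) ≤ ‖z‖}))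
    ((Set.countable_range _).insert _) ?_ ?_
  · rintro _ (rfl | ⟨n, rfl⟩)
    · simp [hν0]
    · exact measure_le_norm_lt_top_of_lintegral_min_one_sq_lt_top hν (by positivity)
  · refine Set.eq_univ_of_forall fun z => ?_
    rcases eq_or_ne z 0 with rfl | hz
    · exact ⟨{0}, Set.mem_insert _ _, rfl⟩
    · obtain ⟨n, hn⟩ := exists_nat_one_div_lt (norm_pos_iff.mpr hz)
      exact ⟨_, Set.mem_insert_of_mem _ ⟨n, rfl⟩, hn.le⟩

section Translation

variable {G β : Type*} [MeasurableSpace G] [AddGroup G] [MeasurableAdd G]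
  {μ : Measure G} [μ.IsAddRightInvariant] {f : G → β}

theorem ae_add_nsmul_eq_of_ae_add_eq {z : G} (h : ∀ᵐ x ∂μ, f (x + z) = f x) (n : ℕ) :
    ∀ᵐ x ∂μ, f (x + n • z) = f x := by
  induction n with
  | zero => simp
  | succ n ih =>
    filter_upwards [ih, (measurePreserving_add_right μ (n • z)).quasiMeasurePreserving.ae h]
      with x hn hz
    rw [succ_nsmul, ← add_assoc, hz, hn]

theorem ae_eq_zero_of_ae_add_eq_of_ae_eq_zero_off [Zero β] {s : Set G} {w : G}
    (hw : ∀ᵐ x ∂μ, f (x + w) = f x) (hs : ∀ᵐ x ∂μ, x ∉ s → f x = 0)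
    (hsw : ∀ x ∈ s, x + w ∉ s) : f =ᵐ[μ] 0 := by
  filter_upwards [hw, hs, (measurePreserving_add_right μ w).quasiMeasurePreserving.ae hs]
    with x hxw hx hxw'
  by_cases hxs : x ∈ s
  · rw [← hxw]
    exact hxw' (hsw x hxs)
  · exact hx hxs

end Translation

theorem Bornology.IsBounded.exists_add_nsmul_notMem {E : Type*} [NormedAddCommGroup E]
    [NormedSpace ℝ E] {s : Set E} (hs : Bornology.IsBounded s) {z : E} (hz : z ≠ 0) :
    ∃ n : ℕ, ∀ x ∈ s, x + n • z ∉ s := by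
  obtain ⟨n, hn⟩ := exists_nat_gt (diam s / ‖z‖)
  refine ⟨n, fun x hx hxn => ?_⟩
  have h := dist_le_diam_of_mem hs hxn hx
  rw [dist_self_add_left, RCLike.norm_nsmul ℝ, nsmul_eq_mul] at h
  rw [div_lt_iff₀ (norm_pos_iff.mpr hz)] at hn
  linarith

theorem ae_eq_zero_of_isBounded_of_ae_add_eq {E β : Type*} [NormedAddCommGroup E]
    [NormedSpace ℝ E] [MeasurableSpace E] [MeasurableAdd E] [Zero β] {μ : Measure E}
    [μ.IsAddRightInvariant] {f : E → β} {s : Set E} (hs : Bornology.IsBounded s)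
    (hfs : ∀ᵐ x ∂μ, x ∉ s → f x = 0) {z : E} (hz : z ≠ 0) (hper : ∀ᵐ x ∂μ, f (x + z) = f x) :
    f =ᵐ[μ] 0 := by
  obtain ⟨n, hn⟩ := hs.exists_add_nsmul_notMem hz
  exact ae_eq_zero_of_ae_add_eq_of_ae_eq_zero_off (ae_add_nsmul_eq_of_ae_add_eq hper n) hfs hn

theorem ae_ae_add_eq_of_lintegral_lintegral_sq_sub_eq_zero {G : Type*} [MeasurableSpace G]
    [AddCommGroup G] [MeasurableAdd₂ G] {μ ν : Measure G} [SFinite μ] [SFinite ν]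
    [μ.IsAddLeftInvariant] {f : G → ℝ} (hf : AEStronglyMeasurable f μ)
    (h : ∫⁻ x, ∫⁻ z, ENNReal.ofReal ((f (x + z) - f x) ^ 2) ∂ν ∂μ = 0) :
    ∀ᵐ z ∂ν, ∀ᵐ x ∂μ, f (x + z) = f x := by
  set F : G × G → ℝ≥0∞ := fun p => ENNReal.ofReal ((f (p.1 + p.2) - f p.2) ^ 2)
  have hF : AEMeasurable F (ν.prod μ) := by
    have hadd := hf.comp_quasiMeasurePreserving (quasiMeasurePreserving_add ν μ)
    exact ((hadd.sub hf.comp_snd).aemeasurable.pow_const 2).ennreal_ofReal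
  have hF0 : F =ᵐ[ν.prod μ] 0 := by
    refine (lintegral_eq_zero_iff' hF).mp ?_
    rw [lintegral_prod_symm F hF]
    simpa only [F, add_comm] using h
  filter_upwards [Measure.ae_ae_of_ae_prod hF0] with z hz
  filter_upwards [hz] with x hx
  simpa [F, add_comm, sub_eq_zero] using hx

/-- Let `ν` be a Lévy measure on `ℝ^d` with `B(0, R₀) ⊆ supp(ν)`. If
`f ∈ L²(ℝ^d)` vanishes a.e. outside a bounded set and
`∫∫ (f(x+z) - f(x))² ν(dz) dx = 0`, then `f = 0` a.e. -/
theorem eq_zero_of_dirichlet_form_eq_zero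
    {d : ℕ} (ν : Measure (EuclideanSpace ℝ (Fin d)))
    (hν0 : ν {0} = 0)
    (hνint : ∫⁻ z, ENNReal.ofReal (min 1 (‖z‖ ^ 2)) ∂ν < ⊤)
    (R₀ : ℝ) (hR₀ : 0 < R₀)
    (hsupp : ∀ x : EuclideanSpace ℝ (Fin d), ‖x‖ < R₀ → ∀ ε > (0 : ℝ), 0 < ν (ball x ε))
    (f : EuclideanSpace ℝ (Fin d) → ℝ) (hf : MemLp f 2 volume)
    (hbd : ∃ s : Set (EuclideanSpace ℝ (Fin d)), Bornology.IsBounded s ∧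
      ∀ᵐ x ∂(volume : Measure (EuclideanSpace ℝ (Fin d))), x ∉ s → f x = 0)
    (hzero : ∫⁻ x, ∫⁻ z, ENNReal.ofReal ((f (x + z) - f x) ^ 2) ∂ν
        ∂(volume : Measure (EuclideanSpace ℝ (Fin d))) = 0) :
    f =ᵐ[(volume : Measure (EuclideanSpace ℝ (Fin d)))] 0 := by
  have := sigmaFinite_of_lintegral_min_one_sq_lt_top hν0 hνint
  have hν_ne : ν ≠ 0 := fun h => by simpa [h] using hsupp 0 (by simpa using hR₀) R₀ hR₀
  have : (ae ν).NeBot := ae_neBot.mpr hν_ne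
  obtain ⟨z, hz0, hz⟩ := ((measure_eq_zero_iff_ae_notMem.mp hν0).and
    (ae_ae_add_eq_of_lintegral_lintegral_sq_sub_eq_zero hf.aestronglyMeasurable hzero)).exists
  obtain ⟨s, hs, hfs⟩ := hbd
  exact ae_eq_zero_of_isBounded_of_ae_add_eq hs hfs hz0 hz
end

section
/- Let d ≥ 1, α ∈ (0, 2), and let ν be the measure on ℝ^d with density z ↦ |z|^{−d−α} · 1_{⋃_{i≥0} {2^{−2i−1} ≤ |z| ≤ 2^{−2i}}}(z) with respect to Lebesgue measure, with characteristic exponent q(ξ) = ∫ (1 − cos⟨ξ, z⟩) ν(dz) and Φ₁(r) := sup_{|ξ| ≤ r} q(ξ). Then there exists a constant c ≥ 1 such that c^{−1} r^{α} ≤ Φ₁(r) ≤ c r^{α} for all r ≥ 1. -/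
open MeasureTheory Metric
open scoped ENNReal

/-- The Lévy measure with density `|z|^{-d-α}` on the union of annuli
`{2^{-2i-1} ≤ |z| ≤ 2^{-2i}}`, `i ≥ 0`, with respect to Lebesgue measure. -/
noncomputable def lacunaryStableMeasure (d : ℕ) (α : ℝ) :
    Measure (EuclideanSpace ℝ (Fin d)) :=
  MeasureTheory.volume.withDensity fun z =>
    Set.indicator
      {z : EuclideanSpace ℝ (Fin d) |
        ∃ i : ℕ, (2 : ℝ) ^ (-(2 * (i : ℝ) + 1)) ≤ ‖z‖ ∧ ‖z‖ ≤ (2 : ℝ) ^ (-(2 * (i : ℝ)))}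
      (fun z => ENNReal.ofReal (‖z‖ ^ (-((d : ℝ) + α)))) z

/-!
The support of `ν` is the union of the shells `Aᵢ = {4⁻ⁱ/2 ≤ ‖z‖ ≤ 4⁻ⁱ}`. On `Aᵢ` the
density is comparable to `4^{i(d+α)}`, `Aᵢ` has volume comparable to `4^{-id}`, and
`1 - cos⟪ξ, z⟫ ≤ min 2 (‖ξ‖‖z‖)²`. Hence for `‖ξ‖ ≤ r` the shell `Aᵢ` contributes at most
a constant times `4^{iα} min 2 (r 4⁻ⁱ)²` to `q ξ`. Splitting the sum over `i` where
`4ⁱ ≈ r`, the terms grow geometrically (ratio `4^α`) before and decay geometrically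
(ratio `4^{α-2}`) after, so the sum is `O(r^α)`. Conversely, if `4ᴺ ≤ r < 4ᴺ⁺¹` and `e` is a
unit vector, then `⟪4ᴺ • e, z⟫ ∈ [1/2, 1]` on a ball of radius `4⁻ᴺ/4` inside `A_N`, which
gives `q (4ᴺ • e) ≳ 4^{Nα} ≳ r^α`.
-/

open Set Real
open scoped InnerProductSpace

lemma two_rpow_neg_two_mul (i : ℕ) : (2 : ℝ) ^ (-(2 * (i : ℝ))) = ((4 : ℝ) ^ i)⁻¹ := by
  rw [rpow_neg zero_le_two, rpow_mul zero_le_two]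
  norm_num

lemma two_rpow_neg_two_mul_add_one (i : ℕ) :
    (2 : ℝ) ^ (-(2 * (i : ℝ) + 1)) = ((4 : ℝ) ^ i)⁻¹ / 2 := by
  rw [neg_add, rpow_add two_pos, two_rpow_neg_two_mul, rpow_neg_one, div_eq_mul_inv]

lemma four_pow_rpow (α : ℝ) (i : ℕ) : ((4 : ℝ) ^ i) ^ α = (4 ^ α) ^ i :=
  (rpow_pow_comm (by norm_num) α i).symm

lemma half_rpow_neg_mul_pow {t : ℝ} (ht : 0 < t) (n : ℕ) (α : ℝ) :
    (t / 2) ^ (-((n : ℝ) + α)) * t ^ n = 2 ^ ((n : ℝ) + α) * t⁻¹ ^ α := by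
  rw [rpow_neg (by positivity), div_rpow ht.le zero_le_two, rpow_add ht, inv_rpow ht.le,
    rpow_natCast]
  field_simp

lemma rpow_neg_mul_quarter_pow {t : ℝ} (ht : 0 < t) (n : ℕ) (α : ℝ) :
    t ^ (-((n : ℝ) + α)) * (t / 4) ^ n = (4 ^ n)⁻¹ * t⁻¹ ^ α := by
  rw [rpow_neg ht.le, rpow_add ht, inv_rpow ht.le, rpow_natCast, div_pow]
  field_simp

lemma rpow_sq_mul_le {r T α : ℝ} (hr : 0 < r) (hrT : r ≤ T) (hα2 : α ≤ 2) :
    r ^ 2 * T ^ α ≤ r ^ α * T ^ 2 := by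
  have hT : 0 < T := hr.trans_le hrT
  have key : r ^ (2 - α) ≤ T ^ (2 - α) := rpow_le_rpow hr.le hrT (by linarith)
  have hsplit : ∀ x : ℝ, 0 < x → x ^ 2 = x ^ α * x ^ (2 - α) := fun x hx => by
    rw [← rpow_add hx, add_sub_cancel, rpow_two]
  rw [hsplit r hr, hsplit T hT]
  have := mul_le_mul_of_nonneg_left key
    (mul_nonneg (rpow_pos_of_pos hr α).le (rpow_pos_of_pos hT α).le)
  linarith

lemma one_sub_cos_le_min (x : ℝ) : 1 - cos x ≤ min 2 (x ^ 2) :=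
  le_min (by linarith [neg_one_le_cos x]) (by nlinarith [one_sub_sq_div_two_le_cos (x := x)])

lemma one_sub_cos_half_pos : 0 < 1 - cos (1 / 2) := by
  have := cos_lt_cos_of_nonneg_of_le_pi_div_two le_rfl (by linarith [pi_gt_three])
    (by norm_num : (0 : ℝ) < 1 / 2)
  rw [cos_zero] at this
  linarith

section NormedAddCommGroup

variable {E : Type*} [NormedAddCommGroup E]

def dyadicShell (t : ℝ) : Set E := {z | t / 2 ≤ ‖z‖ ∧ ‖z‖ ≤ t}

lemma measurableSet_dyadicShell [MeasurableSpace E] [OpensMeasurableSpace E] (t : ℝ) :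
    MeasurableSet (dyadicShell (E := E) t) :=
  (measurableSet_le measurable_const measurable_norm).inter
    (measurableSet_le measurable_norm measurable_const)

lemma norm_rpow_neg_le_of_mem_dyadicShell {z : E} {s t : ℝ} (hs : 0 ≤ s) (ht : 0 < t)
    (hz : z ∈ dyadicShell t) : ‖z‖ ^ (-s) ≤ (t / 2) ^ (-s) :=
  rpow_le_rpow_of_nonpos (by linarith) hz.1 (neg_nonpos.mpr hs)

lemma rpow_neg_le_norm_rpow_neg_of_mem_dyadicShell {z : E} {s t : ℝ} (hs : 0 ≤ s) (ht : 0 < t)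
    (hz : z ∈ dyadicShell t) : t ^ (-s) ≤ ‖z‖ ^ (-s) :=
  rpow_le_rpow_of_nonpos (by linarith [hz.1]) hz.2 (neg_nonpos.mpr hs)

end NormedAddCommGroup

section InnerProductSpace

variable {E : Type*} [NormedAddCommGroup E] [InnerProductSpace ℝ E]

lemma one_sub_cos_inner_le {ξ z : E} {r t : ℝ} (hξ : ‖ξ‖ ≤ r) (hz : ‖z‖ ≤ t) :
    1 - cos ⟪ξ, z⟫_ℝ ≤ min 2 ((r * t) ^ 2) := by
  have h : |⟪ξ, z⟫_ℝ| ≤ r * t := (abs_real_inner_le_norm ξ z).trans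
    (mul_le_mul hξ hz (norm_nonneg _) ((norm_nonneg _).trans hξ))
  exact (one_sub_cos_le_min _).trans
    (min_le_min_left _ (sq_le_sq' (abs_le.mp h).1 (abs_le.mp h).2))

lemma inner_mem_Icc_of_mem_closedBall {e z : E} (he : ‖e‖ = 1) {t : ℝ}
    (hz : z ∈ closedBall ((3 / 4 * t) • e) (t / 4)) : t / 2 ≤ ⟪e, z⟫_ℝ ∧ ⟪e, z⟫_ℝ ≤ t := by
  have hdev : |⟪e, z - (3 / 4 * t) • e⟫_ℝ| ≤ t / 4 :=
    (abs_real_inner_le_norm _ _).trans (by rw [he, one_mul, ← dist_eq_norm]; exact hz)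
  have hsplit : ⟪e, z⟫_ℝ = 3 / 4 * t + ⟪e, z - (3 / 4 * t) • e⟫_ℝ := by
    rw [inner_sub_right, real_inner_smul_right, real_inner_self_eq_norm_sq, he]
    ring
  rw [hsplit]
  constructor <;> linarith [(abs_le.mp hdev).1, (abs_le.mp hdev).2]

lemma closedBall_subset_dyadicShell {e : E} (he : ‖e‖ = 1) {t : ℝ} (ht : 0 ≤ t) :
    closedBall ((3 / 4 * t) • e) (t / 4) ⊆ dyadicShell t := by
  intro z hz
  have hin := (inner_mem_Icc_of_mem_closedBall he hz).1
  refine ⟨hin.trans ?_, ?_⟩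
  · simpa [he] using real_inner_le_norm e z
  · have hc : ‖(3 / 4 * t) • e‖ = 3 / 4 * t := by
      rw [norm_smul, he, Real.norm_of_nonneg (by positivity), mul_one]
    have := norm_le_norm_add_norm_sub' z ((3 / 4 * t) • e)
    rw [hc, ← dist_eq_norm] at this
    linarith [mem_closedBall.mp hz]

lemma integral_one_sub_cos_inner_eq_toReal [MeasurableSpace E] [OpensMeasurableSpace E]
    (μ : Measure E) (ξ : E) :
    ∫ z, (1 - cos ⟪ξ, z⟫_ℝ) ∂μ = (∫⁻ z, ENNReal.ofReal (1 - cos ⟪ξ, z⟫_ℝ) ∂μ).toReal :=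
  integral_eq_lintegral_of_nonneg_ae (.of_forall fun _ => sub_nonneg.mpr (cos_le_one _))
    (by fun_prop : Continuous fun z => 1 - cos ⟪ξ, z⟫_ℝ).aestronglyMeasurable

end InnerProductSpace

lemma exists_le_sSup_image_le {X : Type*} {f : X → ℝ} {S : ℝ → Set X} {g : ℝ → ℝ} {k K : ℝ}
    (hk : 0 < k) (hg : ∀ r, 1 ≤ r → 0 ≤ g r) (hupper : ∀ r, 1 ≤ r → ∀ x ∈ S r, f x ≤ K * g r)
    (hlower : ∀ r, 1 ≤ r → ∃ x ∈ S r, k * g r ≤ f x) :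
    ∃ c, 1 ≤ c ∧ ∀ r, 1 ≤ r → c⁻¹ * g r ≤ sSup (f '' S r) ∧ sSup (f '' S r) ≤ c * g r := by
  refine ⟨max 1 (max k⁻¹ K), le_max_left _ _, fun r hr => ⟨?_, ?_⟩⟩
  · obtain ⟨x, hx, hkx⟩ := hlower r hr
    have hbdd : BddAbove (f '' S r) :=
      ⟨K * g r, by rintro _ ⟨y, hy, rfl⟩; exact hupper r hr y hy⟩
    have hc : (max 1 (max k⁻¹ K))⁻¹ ≤ k :=
      inv_le_of_inv_le₀ hk ((le_max_left _ _).trans (le_max_right _ _))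
    calc _ ≤ k * g r := mul_le_mul_of_nonneg_right hc (hg r hr)
      _ ≤ f x := hkx
      _ ≤ _ := le_csSup hbdd ⟨x, hx, rfl⟩
  · obtain ⟨x, hx, -⟩ := hlower r hr
    refine csSup_le ⟨f x, x, hx, rfl⟩ ?_
    rintro _ ⟨y, hy, rfl⟩
    exact (hupper r hr y hy).trans (mul_le_mul_of_nonneg_right
      ((le_max_right _ _).trans (le_max_right _ _)) (hg r hr))

/-- Up to the factor `2^(d+α) * volume (ball 0 1)`, a bound for the contribution of the shell of
radius `4⁻ⁱ` to `∫ (1 - cos ⟪ξ, z⟫) ∂ν` when `‖ξ‖ ≤ r`. -/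
noncomputable def shellBound (α r : ℝ) (i : ℕ) : ℝ :=
  ((4 : ℝ) ^ i) ^ α * min 2 ((r / 4 ^ i) ^ 2)

lemma shellBound_nonneg (α r : ℝ) (i : ℕ) : 0 ≤ shellBound α r i :=
  mul_nonneg (by positivity) (le_min zero_le_two (sq_nonneg _))

lemma sum_range_shellBound_le {α r : ℝ} (hα : 0 < α) (hr : 0 < r) {M : ℕ}
    (hM : (4 : ℝ) ^ M ≤ 4 * r) :
    ∑ i ∈ Finset.range M, shellBound α r i ≤ 2 * 4 ^ α / (4 ^ α - 1) * r ^ α := by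
  have hu1 : 1 < (4 : ℝ) ^ α := one_lt_rpow (by norm_num) hα
  have hterm : ∀ i, shellBound α r i ≤ 2 * (4 ^ α) ^ i := fun i => by
    rw [shellBound, four_pow_rpow, mul_comm 2]
    exact mul_le_mul_of_nonneg_left (min_le_left _ _) (by positivity)
  calc ∑ i ∈ Finset.range M, shellBound α r i
      ≤ ∑ i ∈ Finset.range M, 2 * ((4 : ℝ) ^ α) ^ i := Finset.sum_le_sum fun i _ => hterm i
    _ = 2 * (((4 ^ α) ^ M - 1) / (4 ^ α - 1)) := by rw [← Finset.mul_sum, geom_sum_eq hu1.ne']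
    _ ≤ 2 * (4 ^ α * r ^ α / (4 ^ α - 1)) := by
        gcongr
        rw [← four_pow_rpow, ← mul_rpow (by norm_num) hr.le]
        linarith [rpow_le_rpow (by positivity) hM hα.le]
    _ = 2 * 4 ^ α / (4 ^ α - 1) * r ^ α := by ring

lemma sum_Ico_shellBound_le {α r : ℝ} (hα2 : α < 2) (hr : 0 < r) {M : ℕ} (hM : r ≤ 4 ^ M)
    (n : ℕ) :
    ∑ i ∈ Finset.Ico M n, shellBound α r i ≤ 1 / (1 - 4 ^ α / 16) * r ^ α := by
  have hu16 : (4 : ℝ) ^ α / 16 < 1 := by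
    have : (4 : ℝ) ^ α < 4 ^ (2 : ℝ) := rpow_lt_rpow_of_exponent_lt (by norm_num) hα2
    norm_num at this
    linarith
  have h16 : ∀ i : ℕ, ((4 : ℝ) ^ i) ^ 2 = 16 ^ i := fun i => by
    rw [← pow_mul, mul_comm, pow_mul]; norm_num
  have hterm : ∀ i, shellBound α r i ≤ r ^ 2 * (4 ^ α / 16) ^ i := fun i =>
    calc shellBound α r i ≤ ((4 : ℝ) ^ i) ^ α * (r / 4 ^ i) ^ 2 :=
          mul_le_mul_of_nonneg_left (min_le_right _ _) (by positivity)
      _ = r ^ 2 * (4 ^ α / 16) ^ i := by rw [four_pow_rpow, div_pow, h16, div_pow]; ring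
  have hM' : r ^ 2 * (4 ^ α / 16) ^ M ≤ r ^ α := by
    have hT : ((4 : ℝ) ^ α / 16) ^ M = ((4 : ℝ) ^ M) ^ α / ((4 : ℝ) ^ M) ^ 2 := by
      rw [div_pow, four_pow_rpow, h16]
    rw [hT, ← mul_div_assoc, div_le_iff₀ (by positivity)]
    exact rpow_sq_mul_le hr hM hα2.le
  calc ∑ i ∈ Finset.Ico M n, shellBound α r i
      ≤ ∑ i ∈ Finset.Ico M n, r ^ 2 * (4 ^ α / 16) ^ i :=
        Finset.sum_le_sum fun i _ => hterm i
    _ ≤ r ^ 2 * ((4 ^ α / 16) ^ M / (1 - 4 ^ α / 16)) := by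
        rw [← Finset.mul_sum]
        gcongr
        exact geom_sum_Ico_le_of_lt_one (by positivity) hu16
    _ ≤ 1 / (1 - 4 ^ α / 16) * r ^ α := by
        rw [← mul_div_assoc, div_eq_mul_one_div, mul_comm]
        gcongr

lemma exists_sum_range_shellBound_le {α : ℝ} (hα : 0 < α) (hα2 : α < 2) :
    ∃ C, 0 ≤ C ∧ ∀ r, 1 ≤ r → ∀ n, ∑ i ∈ Finset.range n, shellBound α r i ≤ C * r ^ α := by
  refine ⟨2 * 4 ^ α / (4 ^ α - 1) + 1 / (1 - 4 ^ α / 16), ?_, fun r hr n => ?_⟩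
  · have hu1 : 1 < (4 : ℝ) ^ α := one_lt_rpow (by norm_num) hα
    have hu16 : (4 : ℝ) ^ α < 4 ^ (2 : ℝ) := rpow_lt_rpow_of_exponent_lt (by norm_num) hα2
    norm_num at hu16
    have : 0 < 1 - (4 : ℝ) ^ α / 16 := by linarith
    have : 0 < (4 : ℝ) ^ α - 1 := by linarith
    positivity
  have hr0 : 0 < r := zero_lt_one.trans_le hr
  obtain ⟨N, hN, hN'⟩ := exists_nat_pow_near hr (by norm_num : (1 : ℝ) < 4)
  calc ∑ i ∈ Finset.range n, shellBound α r i
      ≤ ∑ i ∈ Finset.range (N + 1 + n), shellBound α r i :=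
        Finset.sum_le_sum_of_subset_of_nonneg (Finset.range_mono (by omega))
          fun i _ _ => shellBound_nonneg α r i
    _ = ∑ i ∈ Finset.range (N + 1), shellBound α r i
          + ∑ i ∈ Finset.Ico (N + 1) (N + 1 + n), shellBound α r i :=
        (Finset.sum_range_add_sum_Ico _ (by omega)).symm
    _ ≤ _ := add_le_add (sum_range_shellBound_le hα hr0 (by rw [pow_succ']; linarith))
          (sum_Ico_shellBound_le hα2 hr0 hN'.le _)
    _ = _ := by ring

lemma lacunaryStableMeasure_eq_withDensity (d : ℕ) (α : ℝ) :
    lacunaryStableMeasure d α =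
      (volume.restrict (⋃ i : ℕ, dyadicShell ((4 : ℝ) ^ i)⁻¹)).withDensity
        fun z => ENNReal.ofReal (‖z‖ ^ (-((d : ℝ) + α))) := by
  have hU : {z : EuclideanSpace ℝ (Fin d) |
      ∃ i : ℕ, (2 : ℝ) ^ (-(2 * (i : ℝ) + 1)) ≤ ‖z‖ ∧ ‖z‖ ≤ (2 : ℝ) ^ (-(2 * (i : ℝ)))}
      = ⋃ i : ℕ, dyadicShell ((4 : ℝ) ^ i)⁻¹ := by
    ext z
    simp only [mem_ofPred_eq, mem_iUnion, dyadicShell, two_rpow_neg_two_mul,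
      two_rpow_neg_two_mul_add_one]
  rw [lacunaryStableMeasure, hU, withDensity_indicator
    (MeasurableSet.iUnion fun i => measurableSet_dyadicShell _)]

section Lacunary

variable {d : ℕ} {α : ℝ}

lemma lintegral_lacunaryStableMeasure {g : EuclideanSpace ℝ (Fin d) → ℝ≥0∞}
    (hg : Measurable g) :
    ∫⁻ z, g z ∂lacunaryStableMeasure d α =
      ∫⁻ z in ⋃ i : ℕ, dyadicShell ((4 : ℝ) ^ i)⁻¹,
        ENNReal.ofReal (‖z‖ ^ (-((d : ℝ) + α))) * g z := by
  rw [lacunaryStableMeasure_eq_withDensity,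
    lintegral_withDensity_eq_lintegral_mul _ (by fun_prop) hg]
  rfl

lemma setLIntegral_dyadicShell_le (hα : 0 ≤ α) {t r : ℝ} (ht : 0 < t)
    {ξ : EuclideanSpace ℝ (Fin d)} (hξ : ‖ξ‖ ≤ r) :
    ∫⁻ z in dyadicShell t, ENNReal.ofReal (‖z‖ ^ (-((d : ℝ) + α)))
        * ENNReal.ofReal (1 - cos ⟪ξ, z⟫_ℝ)
      ≤ ENNReal.ofReal (2 ^ ((d : ℝ) + α) * t⁻¹ ^ α * min 2 ((r * t) ^ 2))
        * volume (ball (0 : EuclideanSpace ℝ (Fin d)) 1) := by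
  set c := (t / 2) ^ (-((d : ℝ) + α)) * min 2 ((r * t) ^ 2)
  calc _ ≤ ∫⁻ _ in dyadicShell t, ENNReal.ofReal c := by
        refine setLIntegral_mono' (measurableSet_dyadicShell t) fun z hz => ?_
        rw [← ENNReal.ofReal_mul (by positivity)]
        exact ENNReal.ofReal_le_ofReal (mul_le_mul
          (norm_rpow_neg_le_of_mem_dyadicShell (by positivity) ht hz)
          (one_sub_cos_inner_le hξ hz.2) (by linarith [cos_le_one ⟪ξ, z⟫_ℝ]) (by positivity))
    _ ≤ ENNReal.ofReal c * volume (closedBall (0 : EuclideanSpace ℝ (Fin d)) t) := by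
        rw [setLIntegral_const]
        gcongr
        exact fun z hz => mem_closedBall_zero_iff.mpr hz.2
    _ = _ := by
        rw [Measure.addHaar_closedBall _ _ ht.le, finrank_euclideanSpace_fin, ← mul_assoc,
          ← ENNReal.ofReal_mul (by positivity)]
        congr 2
        rw [mul_right_comm, half_rpow_neg_mul_pow ht]

lemma le_setLIntegral_dyadicShell (hα : 0 ≤ α) {t : ℝ} (ht : 0 < t)
    {e : EuclideanSpace ℝ (Fin d)} (he : ‖e‖ = 1) :
    ENNReal.ofReal ((1 - cos (1 / 2)) * (4 ^ d)⁻¹ * t⁻¹ ^ α)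
        * volume (ball (0 : EuclideanSpace ℝ (Fin d)) 1)
      ≤ ∫⁻ z in dyadicShell t, ENNReal.ofReal (‖z‖ ^ (-((d : ℝ) + α)))
        * ENNReal.ofReal (1 - cos ⟪t⁻¹ • e, z⟫_ℝ) := by
  set B := closedBall ((3 / 4 * t) • e) (t / 4)
  have hB : B ⊆ dyadicShell t := closedBall_subset_dyadicShell he ht.le
  set c := t ^ (-((d : ℝ) + α)) * (1 - cos (1 / 2)) with hc
  calc _ = ENNReal.ofReal c * volume B := by
        rw [Measure.addHaar_closedBall _ _ (by positivity), finrank_euclideanSpace_fin,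
          ← mul_assoc, ← ENNReal.ofReal_mul (by have := one_sub_cos_half_pos; positivity)]
        congr 2
        rw [hc, mul_right_comm (t ^ _), rpow_neg_mul_quarter_pow ht]
        ring
    _ = ∫⁻ _ in B, ENNReal.ofReal c := (setLIntegral_const _ _).symm
    _ ≤ ∫⁻ z in B, ENNReal.ofReal (‖z‖ ^ (-((d : ℝ) + α)))
          * ENNReal.ofReal (1 - cos ⟪t⁻¹ • e, z⟫_ℝ) := by
        refine setLIntegral_mono' measurableSet_closedBall fun z hz => ?_
        rw [← ENNReal.ofReal_mul (by positivity)]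
        refine ENNReal.ofReal_le_ofReal (mul_le_mul
          (rpow_neg_le_norm_rpow_neg_of_mem_dyadicShell (by positivity) ht (hB hz)) ?_
          one_sub_cos_half_pos.le (by positivity))
        obtain ⟨h1, h2⟩ := inner_mem_Icc_of_mem_closedBall he hz
        have hinner : ⟪t⁻¹ • e, z⟫_ℝ = t⁻¹ * ⟪e, z⟫_ℝ := real_inner_smul_left _ _ _
        have hlo : 1 / 2 ≤ ⟪t⁻¹ • e, z⟫_ℝ := by
          rw [hinner, le_inv_mul_iff₀ ht]; linarith
        have hhi : ⟪t⁻¹ • e, z⟫_ℝ ≤ π := by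
          rw [hinner, inv_mul_le_iff₀ ht]; nlinarith [pi_gt_three]
        linarith [cos_le_cos_of_nonneg_of_le_pi (by norm_num) hhi hlo]
    _ ≤ _ := lintegral_mono_set hB

lemma lintegral_one_sub_cos_le (hα : 0 ≤ α) {C r : ℝ}
    (hC : ∀ n, ∑ i ∈ Finset.range n, shellBound α r i ≤ C * r ^ α)
    {ξ : EuclideanSpace ℝ (Fin d)} (hξ : ‖ξ‖ ≤ r) :
    ∫⁻ z, ENNReal.ofReal (1 - cos ⟪ξ, z⟫_ℝ) ∂lacunaryStableMeasure d α
      ≤ ENNReal.ofReal (2 ^ ((d : ℝ) + α) * (C * r ^ α))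
        * volume (ball (0 : EuclideanSpace ℝ (Fin d)) 1) := by
  rw [lintegral_lacunaryStableMeasure (by fun_prop)]
  refine (lintegral_iUnion_le _ _).trans ?_
  calc _ ≤ ∑' i : ℕ, ENNReal.ofReal (2 ^ ((d : ℝ) + α) * shellBound α r i)
          * volume (ball (0 : EuclideanSpace ℝ (Fin d)) 1) := by
        refine ENNReal.tsum_le_tsum fun i => ?_
        refine (setLIntegral_dyadicShell_le hα (by positivity) hξ).trans_eq ?_
        rw [inv_inv, mul_assoc, ← div_eq_mul_inv, shellBound]
    _ = _ := ENNReal.tsum_mul_right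
    _ ≤ _ := by
        gcongr
        refine ENNReal.tsum_le_of_sum_range_le fun n => ?_
        rw [← ENNReal.ofReal_sum_of_nonneg fun i _ => by
          have := shellBound_nonneg α r i; positivity, ← Finset.mul_sum]
        exact ENNReal.ofReal_le_ofReal (mul_le_mul_of_nonneg_left (hC n) (by positivity))

lemma exists_lintegral_one_sub_cos_le (hα : 0 < α) (hα2 : α < 2) :
    ∃ K, 0 ≤ K ∧ ∀ r, 1 ≤ r → ∀ ξ : EuclideanSpace ℝ (Fin d), ‖ξ‖ ≤ r →
      ∫⁻ z, ENNReal.ofReal (1 - cos ⟪ξ, z⟫_ℝ) ∂lacunaryStableMeasure d α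
        ≤ ENNReal.ofReal (K * r ^ α) := by
  obtain ⟨C, hC0, hC⟩ := exists_sum_range_shellBound_le hα hα2
  refine ⟨2 ^ ((d : ℝ) + α) * C * (volume (ball (0 : EuclideanSpace ℝ (Fin d)) 1)).toReal,
    by positivity, fun r hr ξ hξ => ?_⟩
  refine (lintegral_one_sub_cos_le hα.le (hC r hr) hξ).trans_eq ?_
  rw [mul_right_comm _ (ENNReal.toReal _), mul_assoc (2 ^ _),
    ENNReal.ofReal_mul (p := 2 ^ ((d : ℝ) + α) * (C * r ^ α)) (by positivity),
    ENNReal.ofReal_toReal measure_ball_lt_top.ne]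

lemma le_lintegral_one_sub_cos (hα : 0 ≤ α) {e : EuclideanSpace ℝ (Fin d)} (he : ‖e‖ = 1)
    (N : ℕ) :
    ENNReal.ofReal ((1 - cos (1 / 2)) * (4 ^ d)⁻¹ * ((4 : ℝ) ^ N) ^ α)
        * volume (ball (0 : EuclideanSpace ℝ (Fin d)) 1)
      ≤ ∫⁻ z, ENNReal.ofReal (1 - cos ⟪(4 : ℝ) ^ N • e, z⟫_ℝ) ∂lacunaryStableMeasure d α := by
  have h := le_setLIntegral_dyadicShell hα (t := ((4 : ℝ) ^ N)⁻¹) (by positivity) he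
  rw [inv_inv] at h
  rw [lintegral_lacunaryStableMeasure (by fun_prop)]
  exact h.trans (lintegral_mono_set
    (subset_iUnion (fun i : ℕ => dyadicShell (E := EuclideanSpace ℝ (Fin d)) ((4 : ℝ) ^ i)⁻¹)
      N))

lemma exists_le_lintegral_one_sub_cos (hd : 1 ≤ d) (hα : 0 ≤ α) :
    ∃ k, 0 < k ∧ ∀ r, 1 ≤ r → ∃ ξ : EuclideanSpace ℝ (Fin d), ‖ξ‖ ≤ r ∧
      ENNReal.ofReal (k * r ^ α)
        ≤ ∫⁻ z, ENNReal.ofReal (1 - cos ⟪ξ, z⟫_ℝ) ∂lacunaryStableMeasure d α := by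
  set e := EuclideanSpace.single (⟨0, hd⟩ : Fin d) (1 : ℝ)
  have he : ‖e‖ = 1 := by simp [e]
  set V := volume (ball (0 : EuclideanSpace ℝ (Fin d)) 1)
  have hV : 0 < V.toReal :=
    ENNReal.toReal_pos (measure_ball_pos _ _ one_pos).ne' measure_ball_lt_top.ne
  refine ⟨(1 - cos (1 / 2)) * (4 ^ d)⁻¹ * (4 ^ α)⁻¹ * V.toReal,
    by have := one_sub_cos_half_pos; positivity, fun r hr => ?_⟩
  obtain ⟨N, hN, hN'⟩ := exists_nat_pow_near hr (by norm_num : (1 : ℝ) < 4)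
  refine ⟨(4 : ℝ) ^ N • e, by rwa [norm_smul, he, mul_one, norm_of_nonneg (by positivity)], ?_⟩
  refine le_trans ?_ (le_lintegral_one_sub_cos hα he N)
  rw [← ENNReal.ofReal_toReal measure_ball_lt_top.ne, ← ENNReal.ofReal_mul
    (by have := one_sub_cos_half_pos; positivity)]
  refine ENNReal.ofReal_le_ofReal ?_
  have hr : (4 ^ α)⁻¹ * r ^ α ≤ ((4 : ℝ) ^ N) ^ α := by
    rw [← inv_rpow (by norm_num), ← mul_rpow (by norm_num) (by linarith)]
    exact rpow_le_rpow (by positivity) (by rw [pow_succ'] at hN'; linarith) hα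
  have := one_sub_cos_half_pos
  calc _ = (1 - cos (1 / 2)) * (4 ^ d)⁻¹ * ((4 ^ α)⁻¹ * r ^ α) * V.toReal := by ring
    _ ≤ _ := by gcongr

end Lacunary

/-- For the measure above with characteristic exponent
`q(ξ) = ∫ (1 - cos⟨ξ, z⟩) ν(dz)` and `Φ₁(r) = sup_{|ξ| ≤ r} q(ξ)`, there is `c ≥ 1`
with `c⁻¹ r^α ≤ Φ₁(r) ≤ c r^α` for all `r ≥ 1`. -/
theorem lacunaryStableMeasure_sup_charExponent_bounds
    (d : ℕ) (hd : 1 ≤ d) (α : ℝ) (hα : 0 < α) (hα2 : α < 2)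
    (q : EuclideanSpace ℝ (Fin d) → ℝ)
    (hq : ∀ ξ, q ξ = ∫ z, (1 - Real.cos (inner ℝ ξ z)) ∂(lacunaryStableMeasure d α))
    (Φ₁ : ℝ → ℝ)
    (hΦ₁ : ∀ r, Φ₁ r = sSup (q '' closedBall (0 : EuclideanSpace ℝ (Fin d)) r)) :
    ∃ c : ℝ, 1 ≤ c ∧ ∀ r : ℝ, 1 ≤ r →
      c⁻¹ * r ^ α ≤ Φ₁ r ∧ Φ₁ r ≤ c * r ^ α := by
  obtain ⟨K, hK, hupper⟩ := exists_lintegral_one_sub_cos_le (d := d) hα hα2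
  obtain ⟨k, hk, hlower⟩ := exists_le_lintegral_one_sub_cos hd hα.le
  have hq' : ∀ ξ, q ξ =
      (∫⁻ z, ENNReal.ofReal (1 - cos ⟪ξ, z⟫_ℝ) ∂lacunaryStableMeasure d α).toReal :=
    fun ξ => (hq ξ).trans (integral_one_sub_cos_inner_eq_toReal _ ξ)
  simp only [hΦ₁]
  refine exists_le_sSup_image_le (K := K) hk (fun r _ => by positivity) (fun r hr ξ hξ => ?_)
    fun r hr => ?_
  · rw [hq']
    exact ENNReal.toReal_le_of_le_ofReal (by positivity)
      (hupper r hr ξ (mem_closedBall_zero_iff.mp hξ))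
  · obtain ⟨ξ, hξ, hlow⟩ := hlower r hr
    refine ⟨ξ, mem_closedBall_zero_iff.mpr hξ, ?_⟩
    rwa [hq', ← ENNReal.ofReal_le_iff_le_toReal (ne_top_of_le_ne_top ENNReal.ofReal_ne_top
      (hupper r hr ξ hξ))]
end
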